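/- Let γ, τ, M ≥ 0 with γM ≤ τ, let c ≥ 0, Δλ ≥ 0, α ∈ ℝ, and reals λ̂_{T−1}, λ̂_T with λ̂_{T−1} − Δλ ≤ λ̂_T ≤ λ̂_{T−1}. Suppose: (a) R(λ̂_{T−1}, λ̂_T) ≥ α − τ(λ̂_{T−1} − λ̂_T) − 2c, and (b) |R(λ̂_T, λ̂_T) − R(λ̂_{T−1}, λ̂_T)| ≤ γM(λ̂_{T−1} − λ̂_T). Then R(λ̂_T, λ̂_T) ≥ α − 2τΔλ − 2c. In particular, with Δα := 2τΔλ + 2c, R(λ̂_T, λ̂_T) ≥ α − Δα. -/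

import Mathlib

theorem stmt_8_general (γ τ M c Δlam α : ℝ) (hτ0 : 0 ≤ τ)
    (hτ : γ * M ≤ τ)
    (lamprev lamT : ℝ) (hlow : lamprev - Δlam ≤ lamT) (hhigh : lamT ≤ lamprev)
    (R : ℝ → ℝ → ℝ)
    (ha : R lamprev lamT ≥ α - τ * (lamprev - lamT) - 2*c)
    (hb : |R lamT lamT - R lamprev lamT| ≤ γ * M * (lamprev - lamT)) :
    R lamT lamT ≥ α - 2*τ*Δlam - 2*c ∧ R lamT lamT ≥ α - (2*τ*Δlam + 2*c) := by
  have hgap : 0 ≤ lamprev - lamT := sub_nonneg.mpr hhigh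
  have hdrift : γ * M * (lamprev - lamT) ≤ τ * (lamprev - lamT) :=
    mul_le_mul_of_nonneg_right hτ hgap
  have hbound : α - 2*τ*Δlam - 2*c ≤ R lamT lamT :=
    calc α - 2*τ*Δlam - 2*c
        ≤ α - 2*τ*(lamprev - lamT) - 2*c := by gcongr; linarith
      _ ≤ α - τ*(lamprev - lamT) - 2*c - γ*M*(lamprev - lamT) := by linarith
      _ ≤ R lamprev lamT - γ*M*(lamprev - lamT) := by linarith
      _ ≤ R lamT lamT := by linarith [(abs_le.mp hb).1]
  exact ⟨hbound, by linarith⟩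

/-- Tightness of the final threshold: the final true risk cannot fall more than
Δalpha = 2τΔlam + 2c below the target level α. -/
theorem stmt_8 (γ τ M c Δlam α : ℝ) (hγ : 0 ≤ γ) (hτ0 : 0 ≤ τ) (hM0 : 0 ≤ M)
    (hτ : γ * M ≤ τ) (hc : 0 ≤ c) (hΔlam : 0 ≤ Δlam)
    (lamprev lamT : ℝ) (hlow : lamprev - Δlam ≤ lamT) (hhigh : lamT ≤ lamprev)
    (R : ℝ → ℝ → ℝ)
    (ha : R lamprev lamT ≥ α - τ * (lamprev - lamT) - 2*c)
    (hb : |R lamT lamT - R lamprev lamT| ≤ γ * M * (lamprev - lamT)) :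
    R lamT lamT ≥ α - 2*τ*Δlam - 2*c ∧ R lamT lamT ≥ α - (2*τ*Δlam + 2*c) :=
  stmt_8_general γ τ M c Δlam α hτ0 hτ lamprev lamT hlow hhigh R ha hb
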